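/- arXiv:2103.12178 — 4 statements merged into one kernel-verified Lean document; each statement's English description precedes it below -/
import Mathlib

section
/- Let 0 < r₀ < r₁ ≤ ∞ and let h, p, μ₀, μ₁, λ : ℝ → ℝ be functions such that on the open interval (r₀, r₁): h and p are twice differentiable and strictly positive, μ₀ and μ₁ are differentiable, and for every r ∈ (r₀, r₁) both h(r)·p′(r)/p(r) = 4π r (μ₀(r) + μ₁(r)) and (d/dr)(r·h(r)) = 1 − 8π r² μ₀(r) hold. Then for every r ∈ (r₀, r₁), the equation (1/(2 p(r)))·(d/ds)[ (d/ds)(p(s)² h(s))/p(s) ](r) + (1/(r p(r)))·(d/ds)(p(s) h(s))(r) = 8π λ(r) holds if and only if λ(r) = (1/4)(3 μ₁(r) − μ₀(r)) + (r/2) μ₁′(r) + (μ₀(r) + μ₁(r))(1 + 8π r² μ₁(r))/(4 h(r)). -/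
/-!
Both field equations hold on an open neighbourhood of `r`, so they may be differentiated there.
The equations and their derivatives express `p'`, `p''`, `h'`, `h''` through `μ₀`, `μ₁` and their
derivatives; substituting these into the left-hand side turns it into `8π` times the stated
expression for `λ` (the `μ₀'` terms cancel), and the equivalence follows by cancelling `8π`.
-/

open Real Filter Topology

theorem eventually_nhds_of_forall_coe_between {r₀ : ℝ} {r₁ : EReal} {P : ℝ → Prop}
    (hP : ∀ s : ℝ, r₀ < s → (s : EReal) < r₁ → P s) {r : ℝ} (hr₀ : r₀ < r)
    (hr₁ : (r : EReal) < r₁) : ∀ᶠ s in 𝓝 r, P s := by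
  have hU : IsOpen {s : ℝ | r₀ < s ∧ (s : EReal) < r₁} :=
    (isOpen_lt continuous_const continuous_id).inter
      (isOpen_lt continuous_coe_real_ereal continuous_const)
  filter_upwards [hU.mem_nhds ⟨hr₀, hr₁⟩] with s hs using hP s hs.1 hs.2

theorem HasDerivAt.eq_of_eventuallyEq {f g : ℝ → ℝ} {a b r : ℝ} (hf : HasDerivAt f a r)
    (hg : HasDerivAt g b r) (hfg : f =ᶠ[𝓝 r] g) : a = b :=
  (hf.congr_of_eventuallyEq hfg.symm).unique hg

theorem hasDerivAt_deriv_sq_mul_div_self {p h : ℝ → ℝ} {r : ℝ}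
    (hloc : ∀ᶠ s in 𝓝 r, DifferentiableAt ℝ p s ∧ DifferentiableAt ℝ h s ∧ p s ≠ 0)
    (hp' : DifferentiableAt ℝ (deriv p) r) (hh' : DifferentiableAt ℝ (deriv h) r) :
    HasDerivAt (fun s => deriv (fun u => p u ^ 2 * h u) s / p s)
      (2 * deriv (deriv p) r * h r + 3 * deriv p r * deriv h r + p r * deriv (deriv h) r) r := by
  have hquot : (fun s => deriv (fun u => p u ^ 2 * h u) s / p s)
      =ᶠ[𝓝 r] fun s => 2 * deriv p s * h s + p s * deriv h s := by
    filter_upwards [hloc] with s ⟨hps, hhs, hp0⟩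
    rw [deriv_fun_mul (hps.fun_pow 2) hhs, deriv_fun_pow hps]
    field_simp
    ring
  obtain ⟨hpr, hhr, -⟩ := hloc.self_of_nhds
  exact ((((hp'.hasDerivAt.const_mul 2).fun_mul hhr.hasDerivAt).fun_add
    (hpr.hasDerivAt.fun_mul hh'.hasDerivAt)).congr_deriv (by ring)).congr_of_eventuallyEq hquot

theorem tov_identity {r h h₁ h₂ p p₁ p₂ μ₀ μ₁ μ₀' μ₁' : ℝ} (hr : r ≠ 0) (hh : h ≠ 0) (hp : p ≠ 0)
    (e1 : h * p₁ = 4 * π * r * (μ₀ + μ₁) * p)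
    (e2 : h + r * h₁ = 1 - 8 * π * r ^ 2 * μ₀)
    (e1' : h₁ * p₁ + h * p₂ = 4 * π * (μ₀ + μ₁) * p + 4 * π * r * (μ₀' + μ₁') * p
      + 4 * π * r * (μ₀ + μ₁) * p₁)
    (e2' : 2 * h₁ + r * h₂ = -(16 * π * r * μ₀ + 8 * π * r ^ 2 * μ₀')) :
    1 / (2 * p) * (2 * p₂ * h + 3 * p₁ * h₁ + p * h₂) + 1 / (r * p) * (p₁ * h + p * h₁)
      = 8 * π * ((1 / 4) * (3 * μ₁ - μ₀) + (r / 2) * μ₁'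
        + (μ₀ + μ₁) * (1 + 8 * π * r ^ 2 * μ₁) / (4 * h)) := by
  field_simp
  -- eliminate `p₂`, `h₂` by the differentiated equations, then `p₁`, `h₁` by the equations
  linear_combination 2 * ((4 * r * h) * e1' + (2 * p * h) * e2'
    + (16 * π * r ^ 2 * (μ₀ + μ₁) + 2 * r * h₁ + 4 * h) * e1 + (8 * π * r * (μ₀ + μ₁) * p) * e2)

theorem mass_equation_deriv {h μ₀ : ℝ → ℝ} {r : ℝ}
    (hmass : (fun s => h s + s * deriv h s) =ᶠ[𝓝 r] fun s => 1 - 8 * π * s ^ 2 * μ₀ s)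
    (hh : DifferentiableAt ℝ h r) (hh' : DifferentiableAt ℝ (deriv h) r)
    (hμ₀ : DifferentiableAt ℝ μ₀ r) :
    2 * deriv h r + r * deriv (deriv h) r = -(16 * π * r * μ₀ r + 8 * π * r ^ 2 * deriv μ₀ r) := by
  have hL : HasDerivAt (fun s => h s + s * deriv h s)
      (2 * deriv h r + r * deriv (deriv h) r) r :=
    (hh.hasDerivAt.fun_add ((hasDerivAt_id' r).fun_mul hh'.hasDerivAt)).congr_deriv (by ring)
  have hR : HasDerivAt (fun s => 1 - 8 * π * s ^ 2 * μ₀ s)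
      (-(16 * π * r * μ₀ r + 8 * π * r ^ 2 * deriv μ₀ r)) r :=
    ((((hasDerivAt_pow 2 r).const_mul (8 * π)).fun_mul hμ₀.hasDerivAt).const_sub 1).congr_deriv
      (by simp only [Nat.cast_ofNat, Nat.add_one_sub_one, pow_one]; ring)
  exact hL.eq_of_eventuallyEq hR hmass

theorem pressure_equation_deriv {h p μ₀ μ₁ : ℝ → ℝ} {r : ℝ}
    (hpress : (fun s => h s * deriv p s) =ᶠ[𝓝 r] fun s => 4 * π * s * (μ₀ s + μ₁ s) * p s)
    (hh : DifferentiableAt ℝ h r) (hp : DifferentiableAt ℝ p r)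
    (hp' : DifferentiableAt ℝ (deriv p) r) (hμ₀ : DifferentiableAt ℝ μ₀ r)
    (hμ₁ : DifferentiableAt ℝ μ₁ r) :
    deriv h r * deriv p r + h r * deriv (deriv p) r
      = 4 * π * (μ₀ r + μ₁ r) * p r + 4 * π * r * (deriv μ₀ r + deriv μ₁ r) * p r
        + 4 * π * r * (μ₀ r + μ₁ r) * deriv p r := by
  have hL : HasDerivAt (fun s => h s * deriv p s)
      (deriv h r * deriv p r + h r * deriv (deriv p) r) r :=
    hh.hasDerivAt.fun_mul hp'.hasDerivAt
  have hR : HasDerivAt (fun s => 4 * π * s * (μ₀ s + μ₁ s) * p s)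
      (4 * π * (μ₀ r + μ₁ r) * p r + 4 * π * r * (deriv μ₀ r + deriv μ₁ r) * p r
        + 4 * π * r * (μ₀ r + μ₁ r) * deriv p r) r :=
    ((((hasDerivAt_id' r).const_mul (4 * π)).fun_mul
      (hμ₀.hasDerivAt.fun_add hμ₁.hasDerivAt)).fun_mul hp.hasDerivAt).congr_deriv (by ring)
  exact hL.eq_of_eventuallyEq hR hpress

theorem generalized_TOV_general (r₀ : ℝ) (r₁ : EReal) (hr₀ : 0 < r₀)
    (h p μ₀ μ₁ lam : ℝ → ℝ)
    (hh : ∀ r : ℝ, r₀ < r → (r : EReal) < r₁ →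
      DifferentiableAt ℝ h r ∧ DifferentiableAt ℝ (deriv h) r ∧ 0 < h r)
    (hp : ∀ r : ℝ, r₀ < r → (r : EReal) < r₁ →
      DifferentiableAt ℝ p r ∧ DifferentiableAt ℝ (deriv p) r ∧ 0 < p r)
    (hμ₀ : ∀ r : ℝ, r₀ < r → (r : EReal) < r₁ → DifferentiableAt ℝ μ₀ r)
    (hμ₁ : ∀ r : ℝ, r₀ < r → (r : EReal) < r₁ → DifferentiableAt ℝ μ₁ r)
    (heq1 : ∀ r : ℝ, r₀ < r → (r : EReal) < r₁ →
      h r * deriv p r / p r = 4 * π * r * (μ₀ r + μ₁ r))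
    (heq2 : ∀ r : ℝ, r₀ < r → (r : EReal) < r₁ →
      deriv (fun s => s * h s) r = 1 - 8 * π * r ^ 2 * μ₀ r) :
    ∀ r : ℝ, r₀ < r → (r : EReal) < r₁ →
      ((1 / (2 * p r)) * deriv (fun s => deriv (fun u => p u ^ 2 * h u) s / p s) r
          + (1 / (r * p r)) * deriv (fun s => p s * h s) r = 8 * π * lam r
        ↔ lam r = (1 / 4) * (3 * μ₁ r - μ₀ r) + (r / 2) * deriv μ₁ r
            + (μ₀ r + μ₁ r) * (1 + 8 * π * r ^ 2 * μ₁ r) / (4 * h r)) := by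
  intro r hr hr₁
  have near {P : ℝ → Prop} (hP : ∀ s : ℝ, r₀ < s → (s : EReal) < r₁ → P s) :
      ∀ᶠ s in 𝓝 r, P s :=
    eventually_nhds_of_forall_coe_between hP hr hr₁
  obtain ⟨dh, dh', hpos⟩ := hh r hr hr₁
  obtain ⟨dp, dp', ppos⟩ := hp r hr hr₁
  have hpress : (fun s => h s * deriv p s) =ᶠ[𝓝 r] fun s => 4 * π * s * (μ₀ s + μ₁ s) * p s :=
    near fun s hs hs₁ => (div_eq_iff (hp s hs hs₁).2.2.ne').1 (heq1 s hs hs₁)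
  have hmass : (fun s => h s + s * deriv h s) =ᶠ[𝓝 r] fun s => 1 - 8 * π * s ^ 2 * μ₀ s :=
    near fun s hs hs₁ => by
      dsimp only
      rw [← heq2 s hs hs₁, ((hasDerivAt_id' s).fun_mul (hh s hs hs₁).1.hasDerivAt).deriv]
      ring
  have hquot := hasDerivAt_deriv_sq_mul_div_self
    (near fun s hs hs₁ => ⟨(hp s hs hs₁).1, (hh s hs hs₁).1, (hp s hs hs₁).2.2.ne'⟩) dp' dh'
  rw [hquot.deriv, deriv_fun_mul dp dh,
    tov_identity (hr₀.trans hr).ne' hpos.ne' ppos.ne' hpress.self_of_nhds hmass.self_of_nhds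
      (pressure_equation_deriv hpress dh dp dp' (hμ₀ r hr hr₁) (hμ₁ r hr hr₁))
      (mass_equation_deriv hmass dh dh' (hμ₀ r hr hr₁)),
    mul_right_inj' (by positivity), eq_comm]

/-- The generalized Tolman–Oppenheimer–Volkoff equation: for a static spherically
symmetric metric `-p²h dτ² + h⁻¹dr² + r²dσ²` on the radial interval `(r₀, r₁)`,
given the field equations `h p'/p = 4πr(μ₀+μ₁)` and `(rh)' = 1 - 8πr²μ₀`, the
remaining field equation holds at `r` iff
`λ = ¼(3μ₁ - μ₀) + (r/2)μ₁' + (μ₀+μ₁)(1+8πr²μ₁)/(4h)`. -/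
theorem generalized_TOV (r₀ : ℝ) (r₁ : EReal) (hr₀ : 0 < r₀) (hr₀r₁ : (r₀ : EReal) < r₁)
    (h p μ₀ μ₁ lam : ℝ → ℝ)
    (hh : ∀ r : ℝ, r₀ < r → (r : EReal) < r₁ →
      DifferentiableAt ℝ h r ∧ DifferentiableAt ℝ (deriv h) r ∧ 0 < h r)
    (hp : ∀ r : ℝ, r₀ < r → (r : EReal) < r₁ →
      DifferentiableAt ℝ p r ∧ DifferentiableAt ℝ (deriv p) r ∧ 0 < p r)
    (hμ₀ : ∀ r : ℝ, r₀ < r → (r : EReal) < r₁ → DifferentiableAt ℝ μ₀ r)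
    (hμ₁ : ∀ r : ℝ, r₀ < r → (r : EReal) < r₁ → DifferentiableAt ℝ μ₁ r)
    (heq1 : ∀ r : ℝ, r₀ < r → (r : EReal) < r₁ →
      h r * deriv p r / p r = 4 * π * r * (μ₀ r + μ₁ r))
    (heq2 : ∀ r : ℝ, r₀ < r → (r : EReal) < r₁ →
      deriv (fun s => s * h s) r = 1 - 8 * π * r ^ 2 * μ₀ r) :
    ∀ r : ℝ, r₀ < r → (r : EReal) < r₁ →
      ((1 / (2 * p r)) * deriv (fun s => deriv (fun u => p u ^ 2 * h u) s / p s) r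
          + (1 / (r * p r)) * deriv (fun s => p s * h s) r = 8 * π * lam r
        ↔ lam r = (1 / 4) * (3 * μ₁ r - μ₀ r) + (r / 2) * deriv μ₁ r
            + (μ₀ r + μ₁ r) * (1 + 8 * π * r ^ 2 * μ₁ r) / (4 * h r)) :=
  generalized_TOV_general r₀ r₁ hr₀ h p μ₀ μ₁ lam hh hp hμ₀ hμ₁ heq1 heq2
end

section
/- Let 0 < r₀ < r₁ ≤ ∞, let μ : ℝ → ℝ be continuous on (r₀, r₁), let c ∈ ℝ and r⁎ ∈ (r₀, r₁), and define h(r) = (r + c)/r − (2/r)·∫_{r⁎}^{r} 4π x² μ(x) dx for r ∈ (r₀, r₁). Suppose h(r) > 0 for all r ∈ (r₀, r₁) and −μ(r)/4 + μ(r)/(4 h(r)) = 0 for all r ∈ (r₀, r₁). Then μ(r) = 0 for every r ∈ (r₀, r₁). -/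
open Real

/-- Analytic core of the no-pressure corollary: if
`h(r) = (r+c)/r - (2/r)∫_{r⁎}^r 4πx²μ(x) dx` is positive on `(r₀, r₁)` and
`-μ/4 + μ/(4h) = 0` there, then `μ` vanishes on `(r₀, r₁)`. -/
theorem no_pressure_implies_vacuum (r₀ : ℝ) (r₁ : EReal) (hr₀ : 0 < r₀)
    (hr₀r₁ : (r₀ : EReal) < r₁) (μ : ℝ → ℝ)
    (hμ : ContinuousOn μ {r : ℝ | r₀ < r ∧ (r : EReal) < r₁})
    (c rs : ℝ) (hrs : r₀ < rs ∧ (rs : EReal) < r₁) (h : ℝ → ℝ)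
    (hdef : ∀ r : ℝ, r₀ < r → (r : EReal) < r₁ →
      h r = (r + c) / r - (2 / r) * ∫ x in rs..r, 4 * π * x ^ 2 * μ x)
    (hpos : ∀ r : ℝ, r₀ < r → (r : EReal) < r₁ → 0 < h r)
    (heq : ∀ r : ℝ, r₀ < r → (r : EReal) < r₁ → -(μ r) / 4 + μ r / (4 * h r) = 0) :
    ∀ r : ℝ, r₀ < r → (r : EReal) < r₁ → μ r = 0 := by
  intro r hr hr'
  by_contra hne
  set S := {r : ℝ | r₀ < r ∧ (r : EReal) < r₁} with hS
  have hSopen : IsOpen S := by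
    have h1 : IsOpen {r : ℝ | r₀ < r} := isOpen_lt continuous_const continuous_id
    have h2 : IsOpen {r : ℝ | (r : EReal) < r₁} :=
      isOpen_lt continuous_coe_real_ereal continuous_const
    exact h1.inter h2
  have hSconn : S.OrdConnected := by
    constructor
    intro x hx y hy z hz
    exact ⟨lt_of_lt_of_le hx.1 hz.1,
      lt_of_le_of_lt (EReal.coe_le_coe_iff.mpr hz.2) hy.2⟩
  have hrS : r ∈ S := ⟨hr, hr'⟩
  have hcont : ContinuousAt μ r := hμ.continuousAt (hSopen.mem_nhds hrS)
  -- eventually: x ∈ S and |μ x - μ r| < |μ r| / 2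
  have hEv : ∀ᶠ x in nhds r, x ∈ S ∧ dist (μ x) (μ r) < |μ r| / 2 := by
    have h1 : ∀ᶠ x in nhds r, x ∈ S := hSopen.eventually_mem hrS
    have h2 : ∀ᶠ x in nhds r, dist (μ x) (μ r) < |μ r| / 2 :=
      hcont (Metric.ball_mem_nhds _ (by positivity))
    exact h1.and h2
  obtain ⟨ε, hε, hball⟩ := Metric.eventually_nhds_iff.mp hEv
  set δ := ε / 2 with hδ
  have hδpos : 0 < δ := by positivity
  have hmem : ∀ x ∈ Set.Icc (r - δ) (r + δ), x ∈ S ∧ dist (μ x) (μ r) < |μ r| / 2 := by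
    intro x hx
    apply hball
    rw [Real.dist_eq, abs_lt]
    constructor <;> [linarith [hx.1]; linarith [hx.2, hε]]
  -- nonvanishing on the interval
  have hne' : ∀ x ∈ Set.Icc (r - δ) (r + δ), μ x ≠ 0 := by
    intro x hx h0
    have := (hmem x hx).2
    rw [h0, dist_eq_norm, zero_sub, norm_neg, Real.norm_eq_abs] at this
    linarith [abs_nonneg (μ r)]
  -- key: F s = c / 2 for s ∈ S with μ s ≠ 0
  have hF : ∀ s : ℝ, s ∈ S → μ s ≠ 0 → (∫ x in rs..s, 4 * π * x ^ 2 * μ x) = c / 2 := by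
    intro s hsS hsne
    have hs0 : 0 < s := hr₀.trans hsS.1
    have hp := hpos s hsS.1 hsS.2
    have hh := heq s hsS.1 hsS.2
    have h1 : h s = 1 := by
      have hp' : h s ≠ 0 := ne_of_gt hp
      field_simp at hh
      have : μ s * (h s - 1) = 0 := by ring_nf; ring_nf at hh; linarith
      rcases mul_eq_zero.mp this with h0 | h0
      · exact absurd h0 hsne
      · linarith
    have hd := hdef s hsS.1 hsS.2
    rw [h1] at hd
    field_simp at hd
    linarith
  have haS : r - δ ∈ S := (hmem _ ⟨le_refl _, by linarith⟩).1
  have hbS : r + δ ∈ S := (hmem _ ⟨by linarith, le_refl _⟩).1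
  have hFa := hF (r - δ) haS (hne' _ ⟨le_refl _, by linarith⟩)
  have hFb := hF (r + δ) hbS (hne' _ ⟨by linarith, le_refl _⟩)
  -- integrability
  have hint : ∀ a b : ℝ, a ∈ S → b ∈ S →
      IntervalIntegrable (fun x => 4 * π * x ^ 2 * μ x) MeasureTheory.volume a b := by
    intro a b ha hb
    apply ContinuousOn.intervalIntegrable
    have hsub : Set.uIcc a b ⊆ S := hSconn.uIcc_subset ha hb
    exact ((continuousOn_const.mul (continuousOn_pow 2)).mul (hμ.mono hsub))
  have hrsS : rs ∈ S := ⟨hrs.1, hrs.2⟩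
  have hadd := intervalIntegral.integral_add_adjacent_intervals
    (hint rs (r - δ) hrsS haS) (hint (r - δ) (r + δ) haS hbS)
  have hzero : (∫ x in (r - δ)..(r + δ), 4 * π * x ^ 2 * μ x) = 0 := by
    rw [hFa, hFb] at hadd; linarith
  have hab : r - δ < r + δ := by linarith
  -- sign analysis
  rcases Ne.lt_or_gt hne with hneg | hpos'
  · -- μ r < 0 : integrand negative on Ioo
    have : (0:ℝ) < ∫ x in (r - δ)..(r + δ), -(4 * π * x ^ 2 * μ x) := by
      apply intervalIntegral.intervalIntegral_pos_of_pos_on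
      · exact (hint (r - δ) (r + δ) haS hbS).neg
      · intro x hx
        have hxI : x ∈ Set.Icc (r - δ) (r + δ) := ⟨hx.1.le, hx.2.le⟩
        have hmx := (hmem x hxI).2
        rw [Real.dist_eq, abs_lt] at hmx
        have hμx : μ x < 0 := by
          have : |μ r| = -(μ r) := abs_of_neg hneg
          linarith [hmx.2, this ▸ hmx.2]
        have hx0 : 0 < x := by
          have := (hmem x hxI).1.1; linarith
        have : 0 < 4 * π * x ^ 2 := by positivity
        nlinarith
      · exact hab
    rw [intervalIntegral.integral_neg, hzero, neg_zero] at this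
    exact lt_irrefl 0 this
  · -- μ r > 0 : integrand positive on Ioo
    have : (0:ℝ) < ∫ x in (r - δ)..(r + δ), 4 * π * x ^ 2 * μ x := by
      apply intervalIntegral.intervalIntegral_pos_of_pos_on
      · exact hint (r - δ) (r + δ) haS hbS
      · intro x hx
        have hxI : x ∈ Set.Icc (r - δ) (r + δ) := ⟨hx.1.le, hx.2.le⟩
        have hmx := (hmem x hxI).2
        rw [Real.dist_eq, abs_lt] at hmx
        have hμx : 0 < μ x := by
          have : |μ r| = μ r := abs_of_pos hpos'
          linarith [hmx.1, this ▸ hmx.1]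
        have hx0 : 0 < x := by
          have := (hmem x hxI).1.1; linarith
        positivity
      · exact hab
    rw [hzero] at this
    exact lt_irrefl 0 this
end

section
/- Let r⁎ > 0, let μ₀ : ℝ → ℝ be continuous and nonnegative on [r⁎, ∞), suppose r² μ₀(r) tends to a limit l ∈ ℝ as r → ∞, let c ∈ ℝ, define h(r) = (r + c)/r − (2/r)·∫_{r⁎}^{r} 4π x² μ₀(x) dx, and suppose h(r) tends to a limit n > 0 as r → ∞. Then 0 ≤ l < 1/(8π) and n = 1 − 8π l. -/
open Real Filter

/-- Cesàro for integrals: if `g` is continuous on `[a,∞)` and `g x → L` as `x → ∞`,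
then `(∫ x in a..r, g x) / r → L`. -/
lemma cesaro_integral (a L : ℝ) (ha : 0 < a) (g : ℝ → ℝ)
    (hg : ContinuousOn g (Set.Ici a)) (hL : Tendsto g atTop (nhds L)) :
    Tendsto (fun r => (∫ x in a..r, g x) / r) atTop (nhds L) := by
  have hint : ∀ {u v : ℝ}, a ≤ u → a ≤ v → IntervalIntegrable g MeasureTheory.volume u v := by
    intro u v hu hv
    refine (hg.mono ?_).intervalIntegrable
    intro x hx
    have := Set.uIcc_subset_uIcc_iff_le.mp (le_refl (Set.uIcc u v))
    rcases Set.mem_uIcc.mp hx with ⟨h1, _⟩ | ⟨h1, _⟩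
    · exact le_trans hu h1
    · exact le_trans hv h1
  rw [Metric.tendsto_atTop]
  intro ε hε
  obtain ⟨R₀, hR₀⟩ := (Metric.tendsto_atTop.1 hL) (ε/4) (by linarith)
  set R : ℝ := max a R₀ with hRdef
  have haR : a ≤ R := le_max_left _ _
  set C : ℝ := |(∫ x in a..R, g x) - L * R| with hC
  refine ⟨max R (max 1 (4 * C / ε)), fun r hr => ?_⟩
  have hrR : R ≤ r := le_trans (le_max_left _ _) hr
  have hr1 : (1:ℝ) ≤ r := le_trans (le_trans (le_max_left _ _) (le_max_right _ _)) hr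
  have hrC : 4 * C / ε ≤ r := le_trans (le_trans (le_max_right _ _) (le_max_right _ _)) hr
  have hrpos : 0 < r := by linarith
  have har : a ≤ r := le_trans haR hrR
  have hsplit : (∫ x in a..r, g x) = (∫ x in a..R, g x) + ∫ x in R..r, g x :=
    (intervalIntegral.integral_add_adjacent_intervals (hint le_rfl haR) (hint haR har)).symm
  have hconst : (∫ x in R..r, (L : ℝ)) = L * (r - R) := by
    simp [intervalIntegral.integral_const, mul_comm]
  have htail : |∫ x in R..r, (g x - L)| ≤ (ε/4) * (r - R) := by
    have := intervalIntegral.norm_integral_le_of_norm_le_const (C := ε/4)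
      (f := fun x => g x - L) (a := R) (b := r) ?_
    · simpa [abs_of_nonneg (by linarith : (0:ℝ) ≤ r - R)] using this
    · intro x hx
      rw [Set.uIoc_of_le hrR] at hx
      have : R₀ ≤ x := le_trans (le_max_right _ _) hx.1.le
      have := hR₀ x this
      rw [Real.dist_eq] at this
      simpa [Real.norm_eq_abs] using this.le
  have htint : (∫ x in R..r, (g x - L)) = (∫ x in R..r, g x) - L * (r - R) := by
    rw [intervalIntegral.integral_sub (hint haR har) intervalIntegrable_const, hconst]
  have key : (∫ x in a..r, g x) / r - L
      = ((∫ x in a..R, g x) - L * R + ∫ x in R..r, (g x - L)) / r := by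
    rw [htint, hsplit]; field_simp; ring
  rw [Real.dist_eq, key, abs_div, abs_of_pos hrpos, div_lt_iff₀ hrpos]
  have h1 : |(∫ x in a..R, g x) - L * R + ∫ x in R..r, (g x - L)|
      ≤ C + (ε/4) * (r - R) := le_trans (abs_add_le _ _) (by gcongr)
  have hCr : C ≤ ε/4 * r := by
    rcases le_or_gt C 0 with h | h
    · nlinarith
    · rw [div_le_iff₀ hε] at hrC; nlinarith
  have hRnonneg : 0 ≤ R := le_trans ha.le haR
  calc |(∫ x in a..R, g x) - L * R + ∫ x in R..r, (g x - L)|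
      ≤ C + (ε/4) * (r - R) := h1
    _ ≤ ε/4 * r + ε/4 * r := by nlinarith
    _ < ε * r := by nlinarith

/-- Bound on the asymptotic energy density: if `μ₀ ≥ 0` is continuous on `[r⁎, ∞)`,
`r²μ₀(r) → l`, and `h(r) = (r+c)/r - (2/r)∫_{r⁎}^r 4πx²μ₀(x) dx → n > 0` as `r → ∞`,
then `0 ≤ l < 1/(8π)` and `n = 1 - 8πl`. -/
theorem asymptotic_density_bound (rs : ℝ) (hrs : 0 < rs) (μ₀ : ℝ → ℝ)
    (hμ : ContinuousOn μ₀ (Set.Ici rs)) (hμ0 : ∀ r ∈ Set.Ici rs, 0 ≤ μ₀ r) (l : ℝ)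
    (hl : Tendsto (fun r => r ^ 2 * μ₀ r) atTop (nhds l)) (c n : ℝ) (hn : 0 < n)
    (hh : Tendsto (fun r => (r + c) / r - (2 / r) * ∫ x in rs..r, 4 * π * x ^ 2 * μ₀ x)
      atTop (nhds n)) :
    0 ≤ l ∧ l < 1 / (8 * π) ∧ n = 1 - 8 * π * l := by
  have hπ : 0 < π := Real.pi_pos
  -- l ≥ 0
  have hl0 : 0 ≤ l := by
    refine le_of_tendsto_of_tendsto tendsto_const_nhds hl ?_
    filter_upwards [eventually_ge_atTop rs] with r hr
    exact mul_nonneg (sq_nonneg r) (hμ0 r hr)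
  -- Cesàro applied to g = 4πx²μ₀ x
  have hgc : ContinuousOn (fun x => 4 * π * x ^ 2 * μ₀ x) (Set.Ici rs) := by
    exact (continuousOn_const.mul (continuousOn_pow 2)).mul hμ
  have hgl : Tendsto (fun x => 4 * π * x ^ 2 * μ₀ x) atTop (nhds (4 * π * l)) := by
    have := hl.const_mul (4 * π)
    simpa [mul_assoc] using this
  have hces := cesaro_integral rs (4 * π * l) hrs _ hgc hgl
  -- (r+c)/r → 1
  have h1 : Tendsto (fun r : ℝ => (r + c) / r) atTop (nhds 1) := by
    have h0 : Tendsto (fun r : ℝ => 1 + c / r) atTop (nhds 1) := by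
      simpa using (tendsto_const_nhds (α := ℝ) (x := (1:ℝ))).add
        (tendsto_const_nhds.div_atTop (tendsto_id (α := ℝ)))
    refine h0.congr' ?_
    filter_upwards [eventually_gt_atTop 0] with r hr
    field_simp
  -- (2/r)∫ → 8πl
  have h2 : Tendsto (fun r : ℝ => (2 / r) * ∫ x in rs..r, 4 * π * x ^ 2 * μ₀ x)
      atTop (nhds (8 * π * l)) := by
    have h := hces.const_mul 2
    rw [show (2:ℝ) * (4 * π * l) = 8 * π * l by ring] at h
    refine h.congr fun r => ?_
    ring
  have huniq : n = 1 - 8 * π * l := tendsto_nhds_unique hh (h1.sub h2)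
  refine ⟨hl0, ?_, huniq⟩
  rw [lt_div_iff₀ (by positivity)]
  nlinarith
end

section
/- Let t₀ < t₁ and 0 < r₀ < r₁ be extended reals, and let e, g : ℝ × ℝ → ℝ be strictly positive on the open rectangle (t₀, t₁) × (r₀, r₁), such that at every point (t, r) of the rectangle the partial derivative of g with respect to t is zero and the partial derivative of the product e·g with respect to r is zero. Then there exist functions f : ℝ → ℝ and G : ℝ → ℝ, strictly positive on (t₀, t₁) and (r₀, r₁) respectively, such that g(t, r) = G(r) and e(t, r) = f(t)/G(r) for every (t, r) in the rectangle. -/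
open Set

theorem Convex.eq_of_hasDerivWithinAt_zero {𝕜 G : Type*} [RCLike 𝕜] [NormedAddCommGroup G]
    [NormedSpace 𝕜 G] {f : 𝕜 → G} {s : Set 𝕜} (hs : Convex ℝ s)
    (hf : ∀ x ∈ s, HasDerivWithinAt f 0 s x) {x y : 𝕜} (hx : x ∈ s) (hy : y ∈ s) :
    f x = f y := by
  have h := hs.norm_image_sub_le_of_norm_hasDerivWithin_le hf (C := 0) (by simp) hy hx
  rw [zero_mul, norm_le_zero_iff, sub_eq_zero] at h
  exact h

theorem EReal.convex_coe_preimage_Ioo (a b : EReal) : Convex ℝ (((↑) : ℝ → EReal) ⁻¹' Ioo a b) :=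
  (ordConnected_Ioo.preimage_mono EReal.coe_strictMono.monotone).convex

theorem exists_static_factorization {T R : Set ℝ} (hT : Convex ℝ T) (hR : Convex ℝ R)
    {t₀ r₀ : ℝ} (ht₀ : t₀ ∈ T) (hr₀ : r₀ ∈ R) {e g : ℝ → ℝ → ℝ}
    (hepos : ∀ t ∈ T, ∀ r ∈ R, 0 < e t r) (hgpos : ∀ t ∈ T, ∀ r ∈ R, 0 < g t r)
    (hgt : ∀ t ∈ T, ∀ r ∈ R, HasDerivWithinAt (fun s => g s r) 0 T t)
    (hegr : ∀ t ∈ T, ∀ r ∈ R, HasDerivWithinAt (fun s => e t s * g t s) 0 R r) :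
    ∃ f G : ℝ → ℝ, (∀ t ∈ T, 0 < f t) ∧ (∀ r ∈ R, 0 < G r) ∧
      ∀ t ∈ T, ∀ r ∈ R, g t r = G r ∧ e t r = f t / G r := by
  refine ⟨fun t => e t r₀ * g t r₀, fun r => g t₀ r,
    fun t ht => mul_pos (hepos t ht r₀ hr₀) (hgpos t ht r₀ hr₀),
    fun r hr => hgpos t₀ ht₀ r hr, fun t ht r hr => ?_⟩
  have hg : g t r = g t₀ r := hT.eq_of_hasDerivWithinAt_zero (hgt · · r hr) ht ht₀
  have heg : e t r * g t r = e t r₀ * g t r₀ :=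
    hR.eq_of_hasDerivWithinAt_zero (hegr t ht) hr hr₀
  exact ⟨hg, eq_div_of_mul_eq (hgpos t₀ ht₀ r hr).ne' (by beta_reduce; rw [← hg]; exact heg)⟩

theorem static_factorization_general (t₀ t₁ r₀ r₁ : EReal) (ht : t₀ < t₁)
    (hr : r₀ < r₁) (e g : ℝ → ℝ → ℝ)
    (hepos : ∀ t r : ℝ, t₀ < (t : EReal) → (t : EReal) < t₁ →
      r₀ < (r : EReal) → (r : EReal) < r₁ → 0 < e t r)
    (hgpos : ∀ t r : ℝ, t₀ < (t : EReal) → (t : EReal) < t₁ →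
      r₀ < (r : EReal) → (r : EReal) < r₁ → 0 < g t r)
    (hgt : ∀ t r : ℝ, t₀ < (t : EReal) → (t : EReal) < t₁ →
      r₀ < (r : EReal) → (r : EReal) < r₁ → HasDerivAt (fun s => g s r) 0 t)
    (hegr : ∀ t r : ℝ, t₀ < (t : EReal) → (t : EReal) < t₁ →
      r₀ < (r : EReal) → (r : EReal) < r₁ → HasDerivAt (fun s => e t s * g t s) 0 r) :
    ∃ f G : ℝ → ℝ,
      (∀ t : ℝ, t₀ < (t : EReal) → (t : EReal) < t₁ → 0 < f t) ∧
      (∀ r : ℝ, r₀ < (r : EReal) → (r : EReal) < r₁ → 0 < G r) ∧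
      ∀ t r : ℝ, t₀ < (t : EReal) → (t : EReal) < t₁ →
        r₀ < (r : EReal) → (r : EReal) < r₁ →
          g t r = G r ∧ e t r = f t / G r := by
  obtain ⟨ts, hts⟩ := EReal.exists_between_coe_real ht
  obtain ⟨rs, hrs⟩ := EReal.exists_between_coe_real hr
  obtain ⟨f, G, hf, hG, hfact⟩ := exists_static_factorization
    (EReal.convex_coe_preimage_Ioo t₀ t₁) (EReal.convex_coe_preimage_Ioo r₀ r₁)
    (show ts ∈ _ from hts) (show rs ∈ _ from hrs)
    (fun t ht r hr => hepos t r ht.1 ht.2 hr.1 hr.2)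
    (fun t ht r hr => hgpos t r ht.1 ht.2 hr.1 hr.2)
    (fun t ht r hr => (hgt t r ht.1 ht.2 hr.1 hr.2).hasDerivWithinAt)
    (fun t ht r hr => (hegr t r ht.1 ht.2 hr.1 hr.2).hasDerivWithinAt)
  exact ⟨f, G, fun t h₀ h₁ => hf t ⟨h₀, h₁⟩, fun r h₀ h₁ => hG r ⟨h₀, h₁⟩,
    fun t r h₀ h₁ h₂ h₃ => hfact t ⟨h₀, h₁⟩ r ⟨h₂, h₃⟩⟩

/-- Static factorization of the metric coefficients: if `e, g > 0` on the open rectangle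
`(t₀, t₁) × (r₀, r₁)`, `∂g/∂t = 0` and `∂(e·g)/∂r = 0` everywhere on the rectangle, then
`g(t, r) = G(r)` and `e(t, r) = f(t)/G(r)` for some positive functions `f` and `G`. -/
theorem static_factorization (t₀ t₁ r₀ r₁ : EReal) (ht : t₀ < t₁) (hr₀ : 0 < r₀)
    (hr : r₀ < r₁) (e g : ℝ → ℝ → ℝ)
    (hepos : ∀ t r : ℝ, t₀ < (t : EReal) → (t : EReal) < t₁ →
      r₀ < (r : EReal) → (r : EReal) < r₁ → 0 < e t r)
    (hgpos : ∀ t r : ℝ, t₀ < (t : EReal) → (t : EReal) < t₁ →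
      r₀ < (r : EReal) → (r : EReal) < r₁ → 0 < g t r)
    (hgt : ∀ t r : ℝ, t₀ < (t : EReal) → (t : EReal) < t₁ →
      r₀ < (r : EReal) → (r : EReal) < r₁ → HasDerivAt (fun s => g s r) 0 t)
    (hegr : ∀ t r : ℝ, t₀ < (t : EReal) → (t : EReal) < t₁ →
      r₀ < (r : EReal) → (r : EReal) < r₁ → HasDerivAt (fun s => e t s * g t s) 0 r) :
    ∃ f G : ℝ → ℝ,
      (∀ t : ℝ, t₀ < (t : EReal) → (t : EReal) < t₁ → 0 < f t) ∧
      (∀ r : ℝ, r₀ < (r : EReal) → (r : EReal) < r₁ → 0 < G r) ∧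
      ∀ t r : ℝ, t₀ < (t : EReal) → (t : EReal) < t₁ →
        r₀ < (r : EReal) → (r : EReal) < r₁ →
          g t r = G r ∧ e t r = f t / G r :=
  static_factorization_general t₀ t₁ r₀ r₁ ht hr e g hepos hgpos hgt hegr
end
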